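/- Let ξ : ℝ³ → ℝ be twice continuously differentiable, let Φ(r, θ₁, θ₂) = (r cos(2π(αθ₁ + θ₂)), r sin(2π(αθ₁ + θ₂)), τθ₁), and let ξ̂ = ξ ∘ Φ. Then at every point (r, θ₁, θ₂) with r > 0, the Euclidean Laplacian of ξ evaluated at Φ(r, θ₁, θ₂) equals ∂²ξ̂/∂r² + (1/r) ∂ξ̂/∂r + (1/τ²) ∂²ξ̂/∂θ₁² − (2α/τ²) ∂²ξ̂/∂θ₁∂θ₂ + (1/(4π²)) (1/r² + 4π²α²/τ²) ∂²ξ̂/∂θ₂², all partial derivatives being evaluated at (r, θ₁, θ₂). -/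

import Mathlib

/-! In the orthonormal frame `eᵣ = (cos φ, sin φ, 0)`, `e_φ = (-sin φ, cos φ, 0)`, `e_z` with
`φ = 2π(αθ₁ + θ₂)`, the coordinate velocities of `Φ` are `∂ᵣΦ = eᵣ`, `∂_{θ₁}Φ = 2παr e_φ + τ e_z`,
`∂_{θ₂}Φ = 2πr e_φ`, and their derivatives are multiples of `eᵣ`. By the chain rule each second
derivative of `ξ̂` is `D²ξ(∂Φ, ∂Φ) + Dξ(∂²Φ)`. In the stated combination the `Dξ` terms cancel, the
cross terms `D²ξ(e_φ, e_z)` cancel by symmetry of the Hessian, and what is left is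
`D²ξ(eᵣ, eᵣ) + D²ξ(e_φ, e_φ) + D²ξ(e_z, e_z)`: the trace of the Hessian in a rotated orthonormal
frame, which is `Δξ`. -/

noncomputable section

open Real

/-- The Euclidean Laplacian of `ξ : ℝ³ → ℝ`, `Δξ = ∂²ξ/∂x₁² + ∂²ξ/∂x₂² + ∂²ξ/∂x₃²`,
expressed via iterated Fréchet derivatives in the coordinate directions. -/
def lap (ξ : (Fin 3 → ℝ) → ℝ) (x : Fin 3 → ℝ) : ℝ :=
  ∑ i : Fin 3, fderiv ℝ (fun y => fderiv ℝ ξ y (Pi.single i 1)) x (Pi.single i 1)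

/-- The inverse helical coordinate transformation
`Φ(r, θ₁, θ₂) = (r cos(2π(αθ₁ + θ₂)), r sin(2π(αθ₁ + θ₂)), τθ₁)`. -/
def Φmap (α τ : ℝ) (r θ₁ θ₂ : ℝ) : Fin 3 → ℝ :=
  ![r * Real.cos (2 * Real.pi * (α * θ₁ + θ₂)),
    r * Real.sin (2 * Real.pi * (α * θ₁ + θ₂)),
    τ * θ₁]

section ChainRule

variable {E : Type*} [NormedAddCommGroup E] [NormedSpace ℝ E] {ξ : E → ℝ}

theorem hasDerivAt_fderiv_apply_comp {γ v : ℝ → E} {u w : E} {t : ℝ}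
    (hξ : DifferentiableAt ℝ (fderiv ℝ ξ) (γ t)) (hγ : HasDerivAt γ u t) (hv : HasDerivAt v w t) :
    HasDerivAt (fun s => fderiv ℝ ξ (γ s) (v s))
      (fderiv ℝ (fderiv ℝ ξ) (γ t) u (v t) + fderiv ℝ ξ (γ t) w) t :=
  (hξ.hasFDerivAt.comp_hasDerivAt t hγ).clm_apply hv

theorem deriv_comp_eq_fderiv_apply {γ : ℝ → E} {u : E} {t : ℝ}
    (hξ : DifferentiableAt ℝ ξ (γ t)) (hγ : HasDerivAt γ u t) :
    deriv (fun s => ξ (γ s)) t = fderiv ℝ ξ (γ t) u :=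
  (hξ.hasFDerivAt.comp_hasDerivAt t hγ).deriv

theorem deriv_deriv_comp_eq (hξ : ContDiff ℝ 2 ξ) {γ v : ℝ → E} {w : E} {t : ℝ}
    (hγ : ∀ s, HasDerivAt γ (v s) s) (hv : HasDerivAt v w t) :
    deriv (deriv (fun s => ξ (γ s))) t
      = fderiv ℝ (fderiv ℝ ξ) (γ t) (v t) (v t) + fderiv ℝ ξ (γ t) w := by
  have hγ' : deriv (fun s => ξ (γ s)) = fun s => fderiv ℝ ξ (γ s) (v s) :=
    funext fun s => deriv_comp_eq_fderiv_apply (hξ.differentiable two_ne_zero _) (hγ s)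
  rw [hγ']
  exact (hasDerivAt_fderiv_apply_comp
    ((hξ.fderiv_right one_add_one_eq_two.le).differentiable one_ne_zero _) (hγ t) hv).deriv

theorem deriv_deriv_comp₂_eq (hξ : ContDiff ℝ 2 ξ) {Γ : ℝ → ℝ → E} {V : ℝ → E} {u w : E}
    {a b : ℝ} (hΓ : ∀ a', HasDerivAt (Γ a') (V a') b) (hΓb : HasDerivAt (fun a' => Γ a' b) u a)
    (hV : HasDerivAt V w a) :
    deriv (fun a' => deriv (fun b' => ξ (Γ a' b')) b) a
      = fderiv ℝ (fderiv ℝ ξ) (Γ a b) u (V a) + fderiv ℝ ξ (Γ a b) w := by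
  have hΓ' : (fun a' => deriv (fun b' => ξ (Γ a' b')) b) = fun a' => fderiv ℝ ξ (Γ a' b) (V a') :=
    funext fun a' => deriv_comp_eq_fderiv_apply (hξ.differentiable two_ne_zero _) (hΓ a')
  rw [hΓ']
  exact (hasDerivAt_fderiv_apply_comp (γ := fun a' => Γ a' b)
    ((hξ.fderiv_right one_add_one_eq_two.le).differentiable one_ne_zero _) hΓb hV).deriv

end ChainRule

theorem lap_eq_sum_fderiv_fderiv {ξ : (Fin 3 → ℝ) → ℝ} {x : Fin 3 → ℝ}
    (hξ : DifferentiableAt ℝ (fderiv ℝ ξ) x) :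
    lap ξ x = ∑ i : Fin 3, fderiv ℝ (fderiv ℝ ξ) x (Pi.single i 1) (Pi.single i 1) := by
  refine Finset.sum_congr rfl fun i _ => ?_
  rw [fderiv_clm_apply hξ (differentiableAt_const _)]
  simp

def radialVec (φ : ℝ) : Fin 3 → ℝ := cos φ • Pi.single 0 1 + sin φ • Pi.single 1 1

def angularVec (φ : ℝ) : Fin 3 → ℝ := (-sin φ) • Pi.single 0 1 + cos φ • Pi.single 1 1

theorem hasDerivAt_radialVec (φ : ℝ) : HasDerivAt radialVec (angularVec φ) φ :=
  ((hasDerivAt_cos φ).smul_const _).add ((hasDerivAt_sin φ).smul_const _)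

theorem hasDerivAt_angularVec (φ : ℝ) : HasDerivAt angularVec (-radialVec φ) φ := by
  refine (((hasDerivAt_sin φ).neg.smul_const _).add
    ((hasDerivAt_cos φ).smul_const _)).congr_deriv ?_
  simp only [radialVec, neg_add, neg_smul]

def helixAngle (α θ₁ θ₂ : ℝ) : ℝ := 2 * π * (α * θ₁ + θ₂)

theorem Φmap_eq (α τ r θ₁ θ₂ : ℝ) :
    Φmap α τ r θ₁ θ₂ = r • radialVec (helixAngle α θ₁ θ₂) + (τ * θ₁) • Pi.single 2 1 := by
  funext i
  fin_cases i <;> simp [Φmap, radialVec, helixAngle]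

theorem hasDerivAt_helixAngle_θ₁ (α θ₁ θ₂ : ℝ) :
    HasDerivAt (fun a => helixAngle α a θ₂) (2 * π * α) θ₁ := by
  simpa [helixAngle] using (((hasDerivAt_id θ₁).const_mul α).add_const θ₂).const_mul (2 * π)

theorem hasDerivAt_helixAngle_θ₂ (α θ₁ θ₂ : ℝ) :
    HasDerivAt (fun b => helixAngle α θ₁ b) (2 * π) θ₂ := by
  simpa [helixAngle] using ((hasDerivAt_id θ₂).const_add (α * θ₁)).const_mul (2 * π)

section HelicalCoordinates

variable (α τ r θ₁ θ₂ : ℝ)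

theorem hasDerivAt_Φmap_r :
    HasDerivAt (fun s => Φmap α τ s θ₁ θ₂) (radialVec (helixAngle α θ₁ θ₂)) r := by
  simp only [Φmap_eq]
  exact (((hasDerivAt_id r).smul_const _).add_const _).congr_deriv (one_smul _ _)

theorem hasDerivAt_Φmap_θ₁ :
    HasDerivAt (fun a => Φmap α τ r a θ₂)
      ((2 * π * α * r) • angularVec (helixAngle α θ₁ θ₂) + τ • Pi.single 2 1) θ₁ := by
  simp only [Φmap_eq]
  refine ((((hasDerivAt_radialVec _).scomp θ₁
    (hasDerivAt_helixAngle_θ₁ α θ₁ θ₂)).const_smul r).add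
    (((hasDerivAt_id θ₁).const_mul τ).smul_const _)).congr_deriv ?_
  rw [smul_smul, mul_one, mul_comm r]

theorem hasDerivAt_Φmap_θ₂ :
    HasDerivAt (fun b => Φmap α τ r θ₁ b) ((2 * π * r) • angularVec (helixAngle α θ₁ θ₂)) θ₂ := by
  simp only [Φmap_eq]
  refine ((((hasDerivAt_radialVec _).scomp θ₂
    (hasDerivAt_helixAngle_θ₂ α θ₁ θ₂)).const_smul r).add_const _).congr_deriv ?_
  rw [smul_smul, mul_comm r]

theorem hasDerivAt_smul_angularVec_θ₁ (k : ℝ) :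
    HasDerivAt (fun a => k • angularVec (helixAngle α a θ₂))
      ((k * (2 * π * α)) • -radialVec (helixAngle α θ₁ θ₂)) θ₁ := by
  refine (((hasDerivAt_angularVec _).scomp θ₁
    (hasDerivAt_helixAngle_θ₁ α θ₁ θ₂)).const_smul k).congr_deriv ?_
  rw [smul_smul]

theorem hasDerivAt_smul_angularVec_θ₂ (k : ℝ) :
    HasDerivAt (fun b => k • angularVec (helixAngle α θ₁ b))
      ((k * (2 * π)) • -radialVec (helixAngle α θ₁ θ₂)) θ₂ := by
  refine (((hasDerivAt_angularVec _).scomp θ₂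
    (hasDerivAt_helixAngle_θ₂ α θ₁ θ₂)).const_smul k).congr_deriv ?_
  rw [smul_smul]

end HelicalCoordinates

section HelicalDerivatives

variable {ξ : (Fin 3 → ℝ) → ℝ} (hξ : ContDiff ℝ 2 ξ) (α τ r θ₁ θ₂ : ℝ)
include hξ

theorem deriv_comp_Φmap_r :
    deriv (fun s => ξ (Φmap α τ s θ₁ θ₂)) r
      = fderiv ℝ ξ (Φmap α τ r θ₁ θ₂) (radialVec (helixAngle α θ₁ θ₂)) :=
  deriv_comp_eq_fderiv_apply (hξ.differentiable two_ne_zero _) (hasDerivAt_Φmap_r α τ r θ₁ θ₂)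

theorem deriv_deriv_comp_Φmap_r :
    deriv (deriv (fun s => ξ (Φmap α τ s θ₁ θ₂))) r
      = fderiv ℝ (fderiv ℝ ξ) (Φmap α τ r θ₁ θ₂)
          (radialVec (helixAngle α θ₁ θ₂)) (radialVec (helixAngle α θ₁ θ₂)) := by
  rw [deriv_deriv_comp_eq hξ (hasDerivAt_Φmap_r α τ · θ₁ θ₂) (hasDerivAt_const r _), map_zero,
    add_zero]

theorem deriv_deriv_comp_Φmap_θ₁ :
    deriv (deriv (fun a => ξ (Φmap α τ r a θ₂))) θ₁
      = fderiv ℝ (fderiv ℝ ξ) (Φmap α τ r θ₁ θ₂)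
          ((2 * π * α * r) • angularVec (helixAngle α θ₁ θ₂) + τ • Pi.single 2 1)
          ((2 * π * α * r) • angularVec (helixAngle α θ₁ θ₂) + τ • Pi.single 2 1)
        + fderiv ℝ ξ (Φmap α τ r θ₁ θ₂)
          ((2 * π * α * r * (2 * π * α)) • -radialVec (helixAngle α θ₁ θ₂)) :=
  deriv_deriv_comp_eq hξ (hasDerivAt_Φmap_θ₁ α τ r · θ₂)
    ((hasDerivAt_smul_angularVec_θ₁ α θ₁ θ₂ _).add_const _)

theorem deriv_deriv_comp_Φmap_θ₁_θ₂ :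
    deriv (fun a => deriv (fun b => ξ (Φmap α τ r a b)) θ₂) θ₁
      = fderiv ℝ (fderiv ℝ ξ) (Φmap α τ r θ₁ θ₂)
          ((2 * π * α * r) • angularVec (helixAngle α θ₁ θ₂) + τ • Pi.single 2 1)
          ((2 * π * r) • angularVec (helixAngle α θ₁ θ₂))
        + fderiv ℝ ξ (Φmap α τ r θ₁ θ₂)
          ((2 * π * r * (2 * π * α)) • -radialVec (helixAngle α θ₁ θ₂)) :=
  deriv_deriv_comp₂_eq hξ (hasDerivAt_Φmap_θ₂ α τ r · θ₂) (hasDerivAt_Φmap_θ₁ α τ r θ₁ θ₂)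
    (hasDerivAt_smul_angularVec_θ₁ α θ₁ θ₂ _)

theorem deriv_deriv_comp_Φmap_θ₂ :
    deriv (deriv (fun b => ξ (Φmap α τ r θ₁ b))) θ₂
      = fderiv ℝ (fderiv ℝ ξ) (Φmap α τ r θ₁ θ₂)
          ((2 * π * r) • angularVec (helixAngle α θ₁ θ₂))
          ((2 * π * r) • angularVec (helixAngle α θ₁ θ₂))
        + fderiv ℝ ξ (Φmap α τ r θ₁ θ₂)
          ((2 * π * r * (2 * π)) • -radialVec (helixAngle α θ₁ θ₂)) :=
  deriv_deriv_comp_eq hξ (hasDerivAt_Φmap_θ₂ α τ r θ₁)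
    (hasDerivAt_smul_angularVec_θ₂ α θ₁ θ₂ _)

end HelicalDerivatives

theorem ContinuousLinearMap.bilinear_rotate_add {E : Type*} [NormedAddCommGroup E]
    [NormedSpace ℝ E] (H : E →L[ℝ] E →L[ℝ] ℝ) (u v : E) {c s : ℝ} (hcs : c ^ 2 + s ^ 2 = 1) :
    H (c • u + s • v) (c • u + s • v) + H ((-s) • u + c • v) ((-s) • u + c • v)
      = H u u + H v v := by
  simp only [map_add, map_smul, add_apply, smul_apply, smul_eq_mul]
  linear_combination (H u u + H v v) * hcs

theorem bilinear_radialVec_add_angularVec (H : (Fin 3 → ℝ) →L[ℝ] (Fin 3 → ℝ) →L[ℝ] ℝ) (φ : ℝ) :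
    H (radialVec φ) (radialVec φ) + H (angularVec φ) (angularVec φ)
      = H (Pi.single 0 1) (Pi.single 0 1) + H (Pi.single 1 1) (Pi.single 1 1) :=
  H.bilinear_rotate_add _ _ (cos_sq_add_sin_sq φ)

theorem helical_laplacian_combination {E : Type*} [NormedAddCommGroup E] [NormedSpace ℝ E]
    (H : E →L[ℝ] E →L[ℝ] ℝ) (G : E →L[ℝ] ℝ) (eᵣ eφ ez : E) (hH : H ez eφ = H eφ ez)
    {α τ r : ℝ} (hr : r ≠ 0) (hτ : τ ≠ 0) :
    H eᵣ eᵣ + (1 / r) * G eᵣ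
      + (1 / τ ^ 2) * (H ((2 * π * α * r) • eφ + τ • ez) ((2 * π * α * r) • eφ + τ • ez)
          + G ((2 * π * α * r * (2 * π * α)) • -eᵣ))
      - (2 * α / τ ^ 2) * (H ((2 * π * α * r) • eφ + τ • ez) ((2 * π * r) • eφ)
          + G ((2 * π * r * (2 * π * α)) • -eᵣ))
      + (1 / (4 * π ^ 2)) * (1 / r ^ 2 + 4 * π ^ 2 * α ^ 2 / τ ^ 2)
          * (H ((2 * π * r) • eφ) ((2 * π * r) • eφ) + G ((2 * π * r * (2 * π)) • -eᵣ))
      = H eᵣ eᵣ + H eφ eφ + H ez ez := by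
  simp only [map_add, map_smul, map_neg, add_apply, smul_apply, smul_eq_mul, hH]
  field_simp
  ring

theorem stmt_18_general (α τ : ℝ) (hτ : 0 < τ)
    (ξ : (Fin 3 → ℝ) → ℝ) (hξ : ContDiff ℝ 2 ξ)
    (r θ₁ θ₂ : ℝ) (hr : 0 < r) :
    lap ξ (Φmap α τ r θ₁ θ₂)
      = deriv (deriv (fun s => ξ (Φmap α τ s θ₁ θ₂))) r
        + (1 / r) * deriv (fun s => ξ (Φmap α τ s θ₁ θ₂)) r
        + (1 / τ ^ 2) * deriv (deriv (fun a => ξ (Φmap α τ r a θ₂))) θ₁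
        - (2 * α / τ ^ 2) * deriv (fun a => deriv (fun b => ξ (Φmap α τ r a b)) θ₂) θ₁
        + (1 / (4 * Real.pi ^ 2)) * (1 / r ^ 2 + 4 * Real.pi ^ 2 * α ^ 2 / τ ^ 2)
            * deriv (deriv (fun b => ξ (Φmap α τ r θ₁ b))) θ₂ := by
  have hsymm : IsSymmSndFDerivAt ℝ ξ (Φmap α τ r θ₁ θ₂) :=
    hξ.contDiffAt.isSymmSndFDerivAt (by simp)
  rw [deriv_deriv_comp_Φmap_r hξ, deriv_comp_Φmap_r hξ, deriv_deriv_comp_Φmap_θ₁ hξ,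
    deriv_deriv_comp_Φmap_θ₁_θ₂ hξ, deriv_deriv_comp_Φmap_θ₂ hξ,
    helical_laplacian_combination _ _ _ _ _ (hsymm _ _) hr.ne' hτ.ne',
    bilinear_radialVec_add_angularVec,
    lap_eq_sum_fderiv_fderiv
      ((hξ.fderiv_right one_add_one_eq_two.le).differentiable one_ne_zero _),
    Fin.sum_univ_three]

/-- for twice continuously differentiable `ξ : ℝ³ → ℝ` and `ξ̂ = ξ ∘ Φ`, at every
point with `r > 0`,
`Δξ(Φ(r,θ₁,θ₂)) = ξ̂_rr + (1/r) ξ̂_r + (1/τ²) ξ̂_{θ₁θ₁} − (2α/τ²) ξ̂_{θ₁θ₂}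
  + (1/(4π²)) (1/r² + 4π²α²/τ²) ξ̂_{θ₂θ₂}`. -/
theorem stmt_18 (α τ : ℝ) (hα0 : 0 ≤ α) (hα1 : α < 1) (hτ : 0 < τ)
    (ξ : (Fin 3 → ℝ) → ℝ) (hξ : ContDiff ℝ 2 ξ)
    (r θ₁ θ₂ : ℝ) (hr : 0 < r) :
    lap ξ (Φmap α τ r θ₁ θ₂)
      = deriv (deriv (fun s => ξ (Φmap α τ s θ₁ θ₂))) r
        + (1 / r) * deriv (fun s => ξ (Φmap α τ s θ₁ θ₂)) r
        + (1 / τ ^ 2) * deriv (deriv (fun a => ξ (Φmap α τ r a θ₂))) θ₁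
        - (2 * α / τ ^ 2) * deriv (fun a => deriv (fun b => ξ (Φmap α τ r a b)) θ₂) θ₁
        + (1 / (4 * Real.pi ^ 2)) * (1 / r ^ 2 + 4 * Real.pi ^ 2 * α ^ 2 / τ ^ 2)
            * deriv (deriv (fun b => ξ (Φmap α τ r θ₁ b))) θ₂ :=
  stmt_18_general α τ hτ ξ hξ r θ₁ θ₂ hr
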